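/- arXiv:2311.12358 — 2 statements merged into one kernel-verified Lean document; each statement's English description precedes it below -/
import Mathlib

section
/- Let F_k : ℝᵈ → ℝ be differentiable with L-Lipschitz gradient, and let δ = (1/N)∑ᵢ g̃ᵢ with ⟨∇F_k(θ), g̃ᵢ⟩ ≥ 0 for all i. If either δ = 0 or 0 < η ≤ (2/(L‖δ‖²))·⟨∇F_k(θ), δ⟩, then F_k(θ - ηδ) ≤ F_k(θ). -/
open RealInnerProductSpace

/-!
By the descent lemma, an `L`-smooth `F` satisfies
`F (θ - η • δ) ≤ F θ - η * (⟪∇F θ, δ⟫ - L / 2 * η * ‖δ‖ ^ 2)`, and the step-size bound makes the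
bracket nonnegative. When `L * ‖δ‖ ^ 2 ≤ 0` the bound says nothing (and `2 / 0 = 0`); there the
consensus condition, averaged into `0 ≤ ⟪∇F θ, δ⟫`, is what keeps the bracket nonnegative.
-/

section LipschitzGradient

variable {E : Type*} [NormedAddCommGroup E] [InnerProductSpace ℝ E] [CompleteSpace E] {F : E → ℝ}

theorem hasDerivAt_comp_add_smul (hF : Differentiable ℝ F) (x v : E) (t : ℝ) :
    HasDerivAt (fun s : ℝ => F (x + s • v)) ⟪gradient F (x + t • v), v⟫ t := by
  have hline : HasDerivAt (fun s : ℝ => x + s • v) v t := by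
    simpa using ((hasDerivAt_id t).smul_const v).const_add x
  exact ((hF (x + t • v)).hasGradientAt.hasFDerivAt.comp_hasDerivAt t hline).congr_deriv
    (by simp)

theorem inner_gradient_add_smul_sub_le {L : ℝ}
    (hLip : ∀ x y : E, ‖gradient F x - gradient F y‖ ≤ L * ‖x - y‖) (x v : E) {t : ℝ}
    (ht : 0 ≤ t) :
    ⟪gradient F (x + t • v), v⟫ - ⟪gradient F x, v⟫ ≤ L * t * ‖v‖ ^ 2 :=
  calc ⟪gradient F (x + t • v), v⟫ - ⟪gradient F x, v⟫
      = ⟪gradient F (x + t • v) - gradient F x, v⟫ := (inner_sub_left _ _ _).symm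
    _ ≤ ‖gradient F (x + t • v) - gradient F x‖ * ‖v‖ := real_inner_le_norm _ _
    _ ≤ L * ‖(x + t • v) - x‖ * ‖v‖ := by gcongr; exact hLip _ _
    _ = L * t * ‖v‖ ^ 2 := by
      rw [add_sub_cancel_left, norm_smul, Real.norm_of_nonneg ht]; ring

theorem le_add_inner_gradient_add_of_lipschitz_gradient {L : ℝ} (hF : Differentiable ℝ F)
    (hLip : ∀ x y : E, ‖gradient F x - gradient F y‖ ≤ L * ‖x - y‖) (x v : E) :
    F (x + v) ≤ F x + ⟪gradient F x, v⟫ + L / 2 * ‖v‖ ^ 2 := by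
  set φ : ℝ → ℝ := fun t => F (x + t • v) - t * ⟪gradient F x, v⟫ - L / 2 * t ^ 2 * ‖v‖ ^ 2
  have hφ : ∀ t, HasDerivAt φ
      (⟪gradient F (x + t • v), v⟫ - ⟪gradient F x, v⟫ - L * t * ‖v‖ ^ 2) t := fun t => by
    have hquad := ((hasDerivAt_pow 2 t).const_mul (L / 2)).mul_const (‖v‖ ^ 2)
    refine (((hasDerivAt_comp_add_smul hF x v t).sub
      ((hasDerivAt_id t).mul_const ⟪gradient F x, v⟫)).sub hquad).congr_deriv ?_
    simp only [one_mul, Nat.cast_ofNat, Nat.add_one_sub_one, pow_one]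
    ring
  have hanti : AntitoneOn φ (Set.Icc 0 1) :=
    antitoneOn_of_hasDerivWithinAt_nonpos (convex_Icc 0 1)
      (fun t _ => (hφ t).continuousAt.continuousWithinAt) (fun t _ => (hφ t).hasDerivWithinAt)
      fun t ht => by
        rw [interior_Icc] at ht
        linarith [inner_gradient_add_smul_sub_le hLip x v ht.1.le]
  have h := hanti (by norm_num) (by norm_num) zero_le_one
  simp only [φ, one_smul, zero_smul, add_zero, one_mul, one_pow, mul_one, zero_mul,
    sub_zero, ne_eq, OfNat.ofNat_ne_zero, not_false_eq_true, zero_pow, mul_zero] at h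
  linarith

end LipschitzGradient

theorem real_inner_smul_sum_nonneg {E ι : Type*} [NormedAddCommGroup E] [InnerProductSpace ℝ E]
    {s : Finset ι} {c : ℝ} (hc : 0 ≤ c) {u : E} {g : ι → E} (hg : ∀ i ∈ s, 0 ≤ ⟪u, g i⟫) :
    0 ≤ ⟪u, c • ∑ i ∈ s, g i⟫ := by
  rw [real_inner_smul_right, inner_sum]
  exact mul_nonneg hc (Finset.sum_nonneg hg)

theorem mul_le_two_mul_of_le_div_mul {a b η : ℝ} (hb : 0 ≤ b) (hη₀ : 0 ≤ η)
    (hη : η ≤ 2 / a * b) : a * η ≤ 2 * b := by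
  rcases le_or_gt a 0 with ha | ha
  · nlinarith
  · rwa [div_mul_eq_mul_div, le_div_iff₀ ha, mul_comm] at hη

/-- under the consensus condition, a sufficiently small step along the
average of modified gradients does not increase the client objective. -/
theorem consensus_step_decrease {d N : ℕ} (F : EuclideanSpace ℝ (Fin d) → ℝ) (L : ℝ)
    (hdiff : Differentiable ℝ F)
    (hLip : ∀ x y : EuclideanSpace ℝ (Fin d), ‖gradient F x - gradient F y‖ ≤ L * ‖x - y‖)
    (θ : EuclideanSpace ℝ (Fin d)) (gtilde : Fin N → EuclideanSpace ℝ (Fin d))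
    (δ : EuclideanSpace ℝ (Fin d)) (hδ : δ = (1 / (N : ℝ)) • ∑ i : Fin N, gtilde i)
    (hcons : ∀ i : Fin N, 0 ≤ ⟪gradient F θ, gtilde i⟫)
    (η : ℝ)
    (hη : δ = 0 ∨ (0 < η ∧ η ≤ (2 / (L * ‖δ‖ ^ 2)) * ⟪gradient F θ, δ⟫)) :
    F (θ - η • δ) ≤ F θ := by
  rcases hη with rfl | ⟨hη₀, hη⟩
  · simp
  have hcons_avg : 0 ≤ ⟪gradient F θ, δ⟫ :=
    hδ ▸ real_inner_smul_sum_nonneg (by positivity) fun i _ => hcons i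
  have hstep : L * ‖δ‖ ^ 2 * η ≤ 2 * ⟪gradient F θ, δ⟫ :=
    mul_le_two_mul_of_le_div_mul hcons_avg hη₀.le hη
  calc F (θ - η • δ)
      ≤ F θ + ⟪gradient F θ, -(η • δ)⟫ + L / 2 * ‖-(η • δ)‖ ^ 2 := by
        simpa [sub_eq_add_neg] using
          le_add_inner_gradient_add_of_lipschitz_gradient hdiff hLip θ (-(η • δ))
    _ = F θ - η / 2 * (2 * ⟪gradient F θ, δ⟫ - L * ‖δ‖ ^ 2 * η) := by
        rw [inner_neg_right, real_inner_smul_right, norm_neg, norm_smul, Real.norm_eq_abs,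
          mul_pow, sq_abs]
        ring
    _ ≤ F θ := sub_le_self _ (mul_nonneg (by linarith) (by linarith))
end

section
/- Let F : ℝᵈ → ℝ be differentiable with L-Lipschitz gradient and bounded below by F⋆. Suppose the update is θ^{t+1} = θ^t − η·d_t where each d_t ∈ ℝᵈ satisfies ⟨∇F(θ^t), d_t⟩ ≥ μ‖∇F(θ^t)‖² and ‖d_t‖ ≤ M‖∇F(θ^t)‖ for constants μ > 0, M > 0. If η ≤ μ/(LM²), then ∑_{t=0}^{T−1} ‖∇F(θ^t)‖² ≤ 2(F(θ⁰) − F⋆)/(ημ), and in particular min_{t<T} ‖∇F(θ^t)‖² ≤ 2(F(θ⁰) − F⋆)/(ημT). -/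
/-! The Lipschitz gradient gives the quadratic upper bound
`F (x + v) ≤ F x + ⟪∇F x, v⟫ + L/2 ‖v‖²`. Along an aligned direction with `η L M² ≤ μ`, the
quadratic term eats at most half of the first-order decrease `η μ ‖∇F‖²`, so every step lowers `F`
by at least `η μ / 2 ‖∇F (θ t)‖²`. Telescoping against `F⋆` bounds the sum, and the smallest
term is at most the average. -/

open RealInnerProductSpace Finset Set

section LipschitzGradient

variable {E : Type*} [NormedAddCommGroup E] [InnerProductSpace ℝ E] [CompleteSpace E]
  {F : E → ℝ}

theorem hasDerivAt_apply_add_smul {x v : E} {t : ℝ} (hF : DifferentiableAt ℝ F (x + t • v)) :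
    HasDerivAt (fun s : ℝ => F (x + s • v)) ⟪gradient F (x + t • v), v⟫ t := by
  have hline : HasDerivAt (fun s : ℝ => x + s • v) v t := by
    simpa using ((hasDerivAt_id t).smul_const v).const_add x
  exact hF.hasGradientAt.hasFDerivAt.comp_hasDerivAt t hline

theorem apply_add_le_of_lipschitz_gradient {L : ℝ} (hF : Differentiable ℝ F)
    (hLip : ∀ x y, ‖gradient F x - gradient F y‖ ≤ L * ‖x - y‖) (x v : E) :
    F (x + v) ≤ F x + ⟪gradient F x, v⟫ + L / 2 * ‖v‖ ^ 2 := by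
  set c := ⟪gradient F x, v⟫
  have hf : ∀ t : ℝ, HasDerivAt (fun s => F (x + s • v) - s * c)
      (⟪gradient F (x + t • v), v⟫ - c) t := fun t =>
    (hasDerivAt_apply_add_smul (hF _)).sub (by simpa using (hasDerivAt_id t).mul_const c)
  have hB : ∀ t : ℝ, HasDerivAt (fun s => F x + L / 2 * ‖v‖ ^ 2 * s ^ 2) (L * ‖v‖ ^ 2 * t) t :=
    fun t => (((hasDerivAt_pow 2 t).const_mul _).const_add _).congr_deriv (by norm_num; ring)
  have hslope : ∀ t ∈ Ico (0 : ℝ) 1, ⟪gradient F (x + t • v), v⟫ - c ≤ L * ‖v‖ ^ 2 * t := by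
    intro t ht
    calc ⟪gradient F (x + t • v), v⟫ - c = ⟪gradient F (x + t • v) - gradient F x, v⟫ := by
          rw [inner_sub_left]
      _ ≤ ‖gradient F (x + t • v) - gradient F x‖ * ‖v‖ := real_inner_le_norm _ _
      _ ≤ L * ‖t • v‖ * ‖v‖ := by gcongr; simpa using hLip (x + t • v) x
      _ = L * ‖v‖ ^ 2 * t := by rw [norm_smul, Real.norm_of_nonneg ht.1]; ring
  have h01 := image_le_of_deriv_right_le_deriv_boundary
    (fun t _ => (hf t).continuousAt.continuousWithinAt) (fun t _ => (hf t).hasDerivWithinAt)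
    (by simp) (fun t _ => (hB t).continuousAt.continuousWithinAt)
    (fun t _ => (hB t).hasDerivWithinAt) hslope (right_mem_Icc.2 zero_le_one)
  simp only [one_smul, one_mul, one_pow, mul_one] at h01
  linarith

end LipschitzGradient

theorem sufficient_decrease {E : Type*} [NormedAddCommGroup E] [InnerProductSpace ℝ E]
    {F : E → ℝ} {L μ M η : ℝ} {x g d : E}
    (hquad : ∀ v, F (x + v) ≤ F x + ⟪g, v⟫ + L / 2 * ‖v‖ ^ 2) (hL : 0 ≤ L) (hη : 0 < η)
    (hηLM : η * (L * M ^ 2) ≤ μ) (halign : μ * ‖g‖ ^ 2 ≤ ⟪g, d⟫) (hbound : ‖d‖ ≤ M * ‖g‖) :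
    F (x - η • d) + η * μ / 2 * ‖g‖ ^ 2 ≤ F x := by
  have hstep := hquad (-(η • d))
  rw [← sub_eq_add_neg, inner_neg_right, real_inner_smul_right, norm_neg, norm_smul,
    Real.norm_of_nonneg hη.le] at hstep
  have hd : ‖d‖ ^ 2 ≤ M ^ 2 * ‖g‖ ^ 2 := by
    rw [← mul_pow]; exact pow_le_pow_left₀ (norm_nonneg d) hbound 2
  have hquadratic : L / 2 * (η * ‖d‖) ^ 2 ≤ η / 2 * (η * (L * M ^ 2)) * ‖g‖ ^ 2 := by
    calc L / 2 * (η * ‖d‖) ^ 2 = L / 2 * η ^ 2 * ‖d‖ ^ 2 := by ring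
      _ ≤ L / 2 * η ^ 2 * (M ^ 2 * ‖g‖ ^ 2) := by gcongr
      _ = _ := by ring
  have hlinear : η / 2 * (η * (L * M ^ 2)) * ‖g‖ ^ 2 ≤ η / 2 * μ * ‖g‖ ^ 2 := by gcongr
  linarith [mul_le_mul_of_nonneg_left halign hη.le]

theorem mul_sum_range_le_of_forall_add_mul_le {a b : ℕ → ℝ} {c m : ℝ}
    (hdecr : ∀ t, a (t + 1) + c * b t ≤ a t) (hlow : ∀ t, m ≤ a t) (T : ℕ) :
    c * ∑ t ∈ range T, b t ≤ a 0 - m := by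
  calc c * ∑ t ∈ range T, b t = ∑ t ∈ range T, c * b t := mul_sum _ _ _
    _ ≤ ∑ t ∈ range T, (a t - a (t + 1)) := sum_le_sum fun t _ => by linarith [hdecr t]
    _ = a 0 - a T := sum_range_sub' a T
    _ ≤ a 0 - m := by linarith [hlow T]

theorem exists_lt_le_div_of_sum_range_le {f : ℕ → ℝ} {B : ℝ} {T : ℕ} (hT : 0 < T)
    (hsum : ∑ t ∈ range T, f t ≤ B) : ∃ t < T, f t ≤ B / T := by
  obtain ⟨t, ht, hle⟩ :=
    exists_le_of_sum_le (nonempty_range_iff.2 hT.ne') (f := f) (g := fun _ => B / T)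
    (by rw [sum_const, card_range, nsmul_eq_mul, mul_div_cancel₀ _ (by positivity)]; exact hsum)
  exact ⟨t, mem_range.1 ht, hle⟩

theorem aligned_descent_convergence_general {n : ℕ} (F : EuclideanSpace ℝ (Fin n) → ℝ)
    (L Fstar μ M η : ℝ) (hdiff : Differentiable ℝ F)
    (hLip : ∀ x y : EuclideanSpace ℝ (Fin n), ‖gradient F x - gradient F y‖ ≤ L * ‖x - y‖)
    (hbelow : ∀ x, Fstar ≤ F x)
    (θ d : ℕ → EuclideanSpace ℝ (Fin n))
    (hupdate : ∀ t, θ (t + 1) = θ t - η • d t)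
    (hμ : 0 < μ) (hηpos : 0 < η) (hη : η ≤ μ / (L * M ^ 2))
    (halign : ∀ t, μ * ‖gradient F (θ t)‖ ^ 2 ≤ ⟪gradient F (θ t), d t⟫)
    (hbound : ∀ t, ‖d t‖ ≤ M * ‖gradient F (θ t)‖) (T : ℕ) :
    (∑ t ∈ Finset.range T, ‖gradient F (θ t)‖ ^ 2 ≤ 2 * (F (θ 0) - Fstar) / (η * μ)) ∧
      (0 < T → ∃ t < T, ‖gradient F (θ t)‖ ^ 2 ≤ 2 * (F (θ 0) - Fstar) / (η * μ * T)) := by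
  -- `η > 0` rules out `L M² ≤ 0`, where `μ / (L M²) ≤ 0` (junk value `μ / 0 = 0` included).
  have hLM : 0 < L * M ^ 2 := by
    rcases div_pos_iff.1 (hηpos.trans_le hη) with h | h
    exacts [h.2, absurd hμ h.1.not_gt]
  have hL : 0 ≤ L := (pos_of_mul_pos_left hLM (sq_nonneg M)).le
  have hηLM : η * (L * M ^ 2) ≤ μ := (le_div_iff₀ hLM).1 hη
  have hdecr : ∀ t, F (θ (t + 1)) + η * μ / 2 * ‖gradient F (θ t)‖ ^ 2 ≤ F (θ t) := fun t => by
    rw [hupdate]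
    exact sufficient_decrease (apply_add_le_of_lipschitz_gradient hdiff hLip _) hL hηpos hηLM
      (halign t) (hbound t)
  have hsum : ∑ t ∈ range T, ‖gradient F (θ t)‖ ^ 2 ≤ 2 * (F (θ 0) - Fstar) / (η * μ) := by
    rw [le_div_iff₀ (by positivity)]
    linarith [mul_sum_range_le_of_forall_add_mul_le hdecr (fun t => hbelow (θ t)) T]
  refine ⟨hsum, fun hT => ?_⟩
  simpa only [div_div] using exists_lt_le_div_of_sum_range_le hT hsum

/-- abstract convergence guarantee: gradient steps along directions
sufficiently aligned with the true gradient drive the squared gradient norms summable. -/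
theorem aligned_descent_convergence {n : ℕ} (F : EuclideanSpace ℝ (Fin n) → ℝ)
    (L Fstar μ M η : ℝ) (hdiff : Differentiable ℝ F)
    (hLip : ∀ x y : EuclideanSpace ℝ (Fin n), ‖gradient F x - gradient F y‖ ≤ L * ‖x - y‖)
    (hbelow : ∀ x, Fstar ≤ F x)
    (θ d : ℕ → EuclideanSpace ℝ (Fin n))
    (hupdate : ∀ t, θ (t + 1) = θ t - η • d t)
    (hμ : 0 < μ) (hM : 0 < M) (hηpos : 0 < η) (hη : η ≤ μ / (L * M ^ 2))
    (halign : ∀ t, μ * ‖gradient F (θ t)‖ ^ 2 ≤ ⟪gradient F (θ t), d t⟫)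
    (hbound : ∀ t, ‖d t‖ ≤ M * ‖gradient F (θ t)‖) (T : ℕ) :
    (∑ t ∈ Finset.range T, ‖gradient F (θ t)‖ ^ 2 ≤ 2 * (F (θ 0) - Fstar) / (η * μ)) ∧
      (0 < T → ∃ t < T, ‖gradient F (θ t)‖ ^ 2 ≤ 2 * (F (θ 0) - Fstar) / (η * μ * T)) :=
  aligned_descent_convergence_general F L Fstar μ M η hdiff hLip hbelow θ d hupdate hμ hηpos hη
    halign hbound T
end
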